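/- Let p ≥ 3 be an integer and β > β*(p). Then the derivative H′_{β,p}(x) = βpx^{p−1} − arctanh(x) has at most 3 zeros in (0,1), and there exists m̲(β,p) ∈ (0, m_*(β,p)) such that H′_{β,p} ≤ 0 on (0, m̲(β,p)), H′_{β,p} ≥ 0 on (m̲(β,p), m_*(β,p)), and H′_{β,p} ≤ 0 on (m_*(β,p), 1). -/

import Mathlib

/-!
Divided by `x ^ (p - 1)`, the zeros of `H'` in `(0, 1)` are the solutions of `u x = β p` with
`u x = arctanh x / x ^ (p - 1)`. The derivative of `u` has the sign of
`v x = x / (1 - x²) - (p - 1) arctanh x`, which starts at `v 0 = 0`, decreases and then increases,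
so `u` (which blows up at `0`) decreases and then increases on `(0, 1)`, and each level is hit at
most twice. Since `arctanh` blows up at `1`, the maximizer `m` is an interior critical point,
so `u m = β p`; and `H m ≥ H 0` gives a point of `(0, m)` where `u ≤ β p`, which puts `m` on the
increasing branch. The other solution `m̲` lies on the decreasing branch, and the sign pattern of
`H'` is that of `β p - u`.
-/

open Real Set Filter

/-- `I(x) = ½[(1+x)log(1+x) + (1−x)log(1−x)]` (with `Real.log 0 = 0`). -/
noncomputable def bahI (x : ℝ) : ℝ :=
  ((1 + x) * Real.log (1 + x) + (1 - x) * Real.log (1 - x)) / 2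

/-- `H_{β,p}(x) = β xᵖ − I(x)`. -/
noncomputable def bahH (β : ℝ) (p : ℕ) (x : ℝ) : ℝ := β * x ^ p - bahI x

/-- `β*(p) = sup {β ≥ 0 : sup_{x∈[−1,1]} H_{β,p}(x) = 0}`. -/
noncomputable def betaStar (p : ℕ) : ℝ :=
  sSup {β : ℝ | 0 ≤ β ∧ sSup (bahH β p '' Set.Icc (-1 : ℝ) 1) = 0}

/-- inverse hyperbolic tangent. -/
noncomputable def arctanh (x : ℝ) : ℝ := Real.log ((1 + x) / (1 - x)) / 2

open Topology

lemma arctanh_eq_sub_log {x : ℝ} (hx : x ∈ Ioo (-1 : ℝ) 1) :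
    arctanh x = (Real.log (1 + x) - Real.log (1 - x)) / 2 := by
  rw [arctanh, Real.log_div (by linarith [hx.1]) (by linarith [hx.2])]

lemma arctanh_hasDerivAt {x : ℝ} (hx : x ∈ Ioo (-1 : ℝ) 1) :
    HasDerivAt arctanh (1 / (1 - x ^ 2)) x := by
  have h₁ : 0 < 1 + x := by linarith [hx.1]
  have h₂ : 0 < 1 - x := by linarith [hx.2]
  have hlog : HasDerivAt (fun y => (Real.log (1 + y) - Real.log (1 - y)) / 2)
      ((1 / (1 + x) - -1 / (1 - x)) / 2) x := by
    have d₁ := ((hasDerivAt_id x).const_add 1).log h₁.ne'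
    have d₂ := ((hasDerivAt_id x).const_sub 1).log h₂.ne'
    simpa using (d₁.sub d₂).div_const 2
  refine (hlog.congr_of_eventuallyEq ?_).congr_deriv ?_
  · filter_upwards [isOpen_Ioo.mem_nhds hx] with y hy using arctanh_eq_sub_log hy
  · rw [show 1 - x ^ 2 = (1 + x) * (1 - x) by ring]
    field_simp
    ring

lemma half_le_arctanh {x : ℝ} (hx : x ∈ Ico (0 : ℝ) 1) : x / 2 ≤ arctanh x := by
  have h₁ : 0 ≤ Real.log (1 + x) := Real.log_nonneg (by linarith [hx.1])
  have h₂ := Real.log_le_sub_one_of_pos (by linarith [hx.2] : 0 < 1 - x)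
  rw [arctanh_eq_sub_log ⟨by linarith [hx.1], hx.2⟩]
  linarith

lemma tendsto_arctanh_nhdsLT_one : Tendsto arctanh (𝓝[<] 1) atTop := by
  have hsub : Tendsto (fun x : ℝ => 1 - x) (𝓝[<] 1) (𝓝[>] 0) := by
    refine tendsto_nhdsWithin_iff.2 ⟨?_, ?_⟩
    · simpa using tendsto_nhdsWithin_of_tendsto_nhds
        ((continuous_sub_left (1 : ℝ)).tendsto 1)
    · filter_upwards [self_mem_nhdsWithin] with x (hx : x < 1) using sub_pos.2 hx
  have hlog : Tendsto (fun x : ℝ => Real.log (1 + x)) (𝓝[<] 1) (𝓝 (Real.log (1 + 1))) :=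
    tendsto_nhdsWithin_of_tendsto_nhds
      (((continuous_const.add continuous_id).tendsto 1).log (by norm_num))
  have hsum := (hlog.add_atTop (tendsto_neg_atBot_atTop.comp (tendsto_log_nhdsGT_zero.comp hsub))).atTop_div_const two_pos
  refine hsum.congr' ?_
  filter_upwards [Ioo_mem_nhdsLT (show (-1 : ℝ) < 1 by norm_num)] with x hx
  rw [arctanh_eq_sub_log hx]
  simp [sub_eq_add_neg]

lemma bahI_continuous : Continuous bahI :=
  ((Real.continuous_mul_log.comp (continuous_const_add 1)).add
    (Real.continuous_mul_log.comp (continuous_sub_left 1))).div_const 2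

lemma bahH_continuous (β : ℝ) (p : ℕ) : Continuous (bahH β p) :=
  (continuous_const.mul (continuous_pow p)).sub bahI_continuous

lemma bahI_hasDerivAt {x : ℝ} (hx : x ∈ Ioo (-1 : ℝ) 1) : HasDerivAt bahI (arctanh x) x := by
  have d₁ := (Real.hasDerivAt_mul_log (by linarith [hx.1] : 1 + x ≠ 0)).comp x
    ((hasDerivAt_id x).const_add 1)
  have d₂ := (Real.hasDerivAt_mul_log (by linarith [hx.2] : 1 - x ≠ 0)).comp x
    ((hasDerivAt_id x).const_sub 1)
  refine ((d₁.add d₂).div_const 2).congr_deriv ?_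
  rw [arctanh_eq_sub_log hx]
  ring

lemma bahH_hasDerivAt (β : ℝ) (p : ℕ) {x : ℝ} (hx : x ∈ Ioo (-1 : ℝ) 1) :
    HasDerivAt (bahH β p) (β * p * x ^ (p - 1) - arctanh x) x := by
  refine (((hasDerivAt_pow p x).const_mul β).sub (bahI_hasDerivAt hx)).congr_deriv ?_
  ring

lemma exists_strictAntiOn_bahH (β : ℝ) (p : ℕ) :
    ∃ a ∈ Ico (0 : ℝ) 1, StrictAntiOn (bahH β p) (Icc a 1) := by
  obtain ⟨a, ha, hlarge⟩ := (mem_nhdsLT_iff_exists_Ioo_subset.1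
    (tendsto_arctanh_nhdsLT_one.eventually_gt_atTop |β * p|))
  refine ⟨max a 0, ⟨le_max_right _ _, max_lt ha one_pos⟩,
    strictAntiOn_of_deriv_neg (convex_Icc _ _) (bahH_continuous β p).continuousOn ?_⟩
  rw [interior_Icc]
  intro x hx
  have hx₀ : 0 < x := (le_max_right _ _).trans_lt hx.1
  rw [(bahH_hasDerivAt β p ⟨by linarith, hx.2⟩).deriv]
  have hpow : |x ^ (p - 1)| ≤ 1 := by
    rw [abs_pow, abs_of_pos hx₀]
    exact pow_le_one₀ hx₀.le hx.2.le
  have hbound : β * p * x ^ (p - 1) ≤ |β * p| :=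
    calc β * p * x ^ (p - 1) ≤ |β * p * x ^ (p - 1)| := le_abs_self _
      _ = |β * p| * |x ^ (p - 1)| := abs_mul _ _
      _ ≤ |β * p| := mul_le_of_le_one_right (abs_nonneg _) hpow
  have harctanh : |β * p| < arctanh x := hlarge ⟨(le_max_left _ _).trans_lt hx.1, hx.2⟩
  linarith

lemma lt_one_of_isMaxOn_bahH {β : ℝ} {p : ℕ} {m : ℝ} (hm : m ≤ 1)
    (hmax : IsMaxOn (bahH β p) (Icc (-1) 1) m) : m < 1 := by
  refine hm.lt_of_ne fun h => ?_
  obtain ⟨a, ha, hanti⟩ := exists_strictAntiOn_bahH β p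
  have hlt := hanti ⟨le_rfl, ha.2.le⟩ ⟨ha.2.le, le_rfl⟩ ha.2
  exact (hmax ⟨by linarith [ha.1], ha.2.le⟩).not_gt (h ▸ hlt)

section Valley

variable {α β : Type*} [LinearOrder α] [Preorder β] {f : α → β} {a b s x₁ x₂ : α} {c : β}

lemma valley_sign_pattern (hanti : StrictAntiOn f (Ioc a s)) (hmono : StrictMonoOn f (Ico s b))
    (h₁ : x₁ ∈ Ioc a s) (h₂ : x₂ ∈ Ico s b) (hf₁ : f x₁ = c) (hf₂ : f x₂ = c) :
    (∀ x ∈ Ioo a x₁, c < f x) ∧ (∀ x ∈ Ioo x₁ x₂, f x < c) ∧ ∀ x ∈ Ioo x₂ b, c < f x := by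
  refine ⟨fun x hx => ?_, fun x hx => ?_, fun x hx => ?_⟩
  · exact hf₁ ▸ hanti ⟨hx.1, hx.2.le.trans h₁.2⟩ h₁ hx.2
  · rcases le_or_gt x s with hxs | hxs
    · exact hf₁ ▸ hanti h₁ ⟨h₁.1.trans hx.1, hxs⟩ hx.1
    · exact hf₂ ▸ hmono ⟨hxs.le, hx.2.trans h₂.2⟩ h₂ hx.2
  · exact hf₂ ▸ hmono h₂ ⟨h₂.1.trans hx.1.le, hx.2⟩ hx.1

lemma valley_levelSet_subset (hanti : StrictAntiOn f (Ioc a s))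
    (hmono : StrictMonoOn f (Ico s b)) (h₁ : x₁ ∈ Ioc a s) (h₂ : x₂ ∈ Ico s b)
    (hf₁ : f x₁ = c) (hf₂ : f x₂ = c) : {x ∈ Ioo a b | f x = c} ⊆ {x₁, x₂} := by
  obtain ⟨hleft, hmid, hright⟩ := valley_sign_pattern hanti hmono h₁ h₂ hf₁ hf₂
  rintro x ⟨hx, rfl⟩
  rcases lt_trichotomy x x₁ with hx₁ | rfl | hx₁
  · exact absurd (hleft x ⟨hx.1, hx₁⟩) (lt_irrefl _)
  · exact Or.inl rfl
  rcases lt_trichotomy x x₂ with hx₂ | rfl | hx₂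
  · exact absurd (hmid x ⟨hx₁, hx₂⟩) (lt_irrefl _)
  · exact Or.inr rfl
  · exact absurd (hright x ⟨hx₂, hx.2⟩) (lt_irrefl _)

end Valley

noncomputable def arctanhDivPow (k : ℕ) (x : ℝ) : ℝ := arctanh x / x ^ k

-- `x ^ (k + 1)` times the derivative of `arctanhDivPow k`
noncomputable def arctanhDivPowNum (k : ℕ) (x : ℝ) : ℝ := x / (1 - x ^ 2) - k * arctanh x

section arctanhDivPow

variable {k : ℕ} {x s t : ℝ}

lemma arctanhDivPow_hasDerivAt (k : ℕ) (hx : x ∈ Ioo (0 : ℝ) 1) :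
    HasDerivAt (arctanhDivPow k) (arctanhDivPowNum k x / x ^ (k + 1)) x := by
  have hx₀ : x ≠ 0 := hx.1.ne'
  have hx₁ : 1 - x ^ 2 ≠ 0 := by nlinarith [hx.1, hx.2]
  refine ((arctanh_hasDerivAt ⟨by linarith [hx.1], hx.2⟩).div (hasDerivAt_pow k x)
    (pow_ne_zero k hx₀)).congr_deriv ?_
  rcases k with _ | k
  · simp only [arctanhDivPowNum]
    field_simp
    simp
  · simp only [arctanhDivPowNum, Nat.add_sub_cancel]
    field_simp
    ring

lemma arctanhDivPowNum_hasDerivAt (k : ℕ) (hx : x ∈ Ioo (-1 : ℝ) 1) :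
    HasDerivAt (arctanhDivPowNum k) (((k + 1) * x ^ 2 - (k - 1)) / (1 - x ^ 2) ^ 2) x := by
  have hx₁ : 1 - x ^ 2 ≠ 0 := by nlinarith [hx.1, hx.2]
  have hden : HasDerivAt (fun y : ℝ => 1 - y ^ 2) (-(2 * x)) x := by
    simpa using (hasDerivAt_pow 2 x).const_sub 1
  refine (((hasDerivAt_id x).div hden hx₁).sub
    ((arctanh_hasDerivAt hx).const_mul (k : ℝ))).congr_deriv ?_
  simp only [id]
  field_simp
  ring

lemma arctanhDivPowNum_zero (k : ℕ) : arctanhDivPowNum k 0 = 0 := by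
  simp [arctanhDivPowNum, arctanh]

lemma arctanhDivPowNum_continuousOn (k : ℕ) :
    ContinuousOn (arctanhDivPowNum k) (Ioo (-1) 1) :=
  fun _ hx => (arctanhDivPowNum_hasDerivAt k hx).continuousAt.continuousWithinAt

lemma sqrt_sub_one_div_add_one_lt_one (k : ℕ) : √(((k : ℝ) - 1) / (k + 1)) < 1 := by
  rw [Real.sqrt_lt' one_pos, div_lt_iff₀ (by positivity)]
  linarith

lemma arctanhDivPowNum_strictAntiOn (k : ℕ) :
    StrictAntiOn (arctanhDivPowNum k) (Icc 0 √(((k : ℝ) - 1) / (k + 1))) := by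
  have hr := sqrt_sub_one_div_add_one_lt_one k
  refine strictAntiOn_of_deriv_neg (convex_Icc _ _)
    ((arctanhDivPowNum_continuousOn k).mono (Icc_subset_Ioo (by norm_num) hr)) ?_
  rw [interior_Icc]
  intro x hx
  rw [(arctanhDivPowNum_hasDerivAt k ⟨by linarith [hx.1], by linarith [hx.2]⟩).deriv]
  have hsq := (Real.lt_sqrt hx.1.le).1 hx.2
  rw [lt_div_iff₀ (by positivity)] at hsq
  have hx₁ : 0 < 1 - x ^ 2 := by nlinarith [hx.1, hx.2]
  exact div_neg_of_neg_of_pos (by linarith) (by positivity)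

lemma arctanhDivPowNum_strictMonoOn (k : ℕ) :
    StrictMonoOn (arctanhDivPowNum k) (Ico √(((k : ℝ) - 1) / (k + 1)) 1) := by
  have hr := Real.sqrt_nonneg (((k : ℝ) - 1) / (k + 1))
  refine strictMonoOn_of_deriv_pos (convex_Ico _ _)
    ((arctanhDivPowNum_continuousOn k).mono (Ico_subset_Ioo_left (by linarith))) ?_
  rw [interior_Ico]
  intro x hx
  rw [(arctanhDivPowNum_hasDerivAt k ⟨by linarith [hx.1], hx.2⟩).deriv]
  have hsq := (Real.sqrt_lt' (by linarith [hx.1])).1 hx.1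
  rw [div_lt_iff₀ (by positivity)] at hsq
  have hx₁ : 0 < 1 - x ^ 2 := by nlinarith [hx.1, hx.2]
  exact div_pos (by linarith) (by positivity)

lemma arctanhDivPowNum_neg (hx : x ∈ Ioc 0 √(((k : ℝ) - 1) / (k + 1))) :
    arctanhDivPowNum k x < 0 :=
  arctanhDivPowNum_zero k ▸ arctanhDivPowNum_strictAntiOn k
    ⟨le_rfl, hx.1.le.trans hx.2⟩ ⟨hx.1.le, hx.2⟩ hx.1

lemma arctanhDivPowNum_neg_of_nonpos (hx : x ∈ Ioo 0 t) (ht : t < 1)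
    (hvt : arctanhDivPowNum k t ≤ 0) : arctanhDivPowNum k x < 0 := by
  rcases le_or_gt x √(((k : ℝ) - 1) / (k + 1)) with hxr | hxr
  · exact arctanhDivPowNum_neg ⟨hx.1, hxr⟩
  · exact (arctanhDivPowNum_strictMonoOn k ⟨hxr.le, hx.2.trans ht⟩
      ⟨hxr.le.trans hx.2.le, ht⟩ hx.2).trans_le hvt

-- `arctanhDivPowNum k` vanishes at `0`, decreases up to `√((k-1)/(k+1))` (positive as `k ≥ 2`)
-- and then increases, so `s` is its unique zero in `(0, 1)`.
lemma exists_arctanhDivPowNum_sign_change (hk : 2 ≤ k) (ht : t ∈ Ioo (0 : ℝ) 1)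
    (hvt : 0 < arctanhDivPowNum k t) :
    ∃ s ∈ Ioo 0 t, (∀ x ∈ Ioo 0 s, arctanhDivPowNum k x < 0) ∧
      ∀ x ∈ Ioo s 1, 0 < arctanhDivPowNum k x := by
  set r := √(((k : ℝ) - 1) / (k + 1))
  have hk' : (2 : ℝ) ≤ k := by exact_mod_cast hk
  have hr₀ : 0 < r := Real.sqrt_pos.2 (div_pos (by linarith) (by positivity))
  have hvr : arctanhDivPowNum k r < 0 := arctanhDivPowNum_neg ⟨hr₀, le_rfl⟩
  have hrt : r < t := lt_of_not_ge fun h => (arctanhDivPowNum_neg ⟨ht.1, h⟩).not_gt hvt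
  obtain ⟨s, hs, hvs⟩ := intermediate_value_Ioo hrt.le
    ((arctanhDivPowNum_continuousOn k).mono (Icc_subset_Ioo (by linarith) ht.2)) ⟨hvr, hvt⟩
  refine ⟨s, ⟨hr₀.trans hs.1, hs.2⟩, fun x hx => ?_, fun x hx => ?_⟩
  · exact arctanhDivPowNum_neg_of_nonpos hx (hs.2.trans ht.2) hvs.le
  · exact hvs ▸ arctanhDivPowNum_strictMonoOn k ⟨hs.1.le, hs.2.trans ht.2⟩
      ⟨hs.1.le.trans hx.1.le, hx.2⟩ hx.1

lemma arctanhDivPow_continuousOn (k : ℕ) : ContinuousOn (arctanhDivPow k) (Ioo 0 1) :=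
  fun _ hx => (arctanhDivPow_hasDerivAt k hx).continuousAt.continuousWithinAt

lemma arctanhDivPow_strictAntiOn (hs : s < 1) (hv : ∀ x ∈ Ioo 0 s, arctanhDivPowNum k x < 0) :
    StrictAntiOn (arctanhDivPow k) (Ioc 0 s) := by
  refine strictAntiOn_of_deriv_neg (convex_Ioc 0 s)
    ((arctanhDivPow_continuousOn k).mono (Ioc_subset_Ioo_right hs)) ?_
  rw [interior_Ioc]
  intro x hx
  rw [(arctanhDivPow_hasDerivAt k ⟨hx.1, hx.2.trans hs⟩).deriv]
  exact div_neg_of_neg_of_pos (hv x hx) (pow_pos hx.1 _)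

lemma arctanhDivPow_strictMonoOn (hs : 0 < s) (hv : ∀ x ∈ Ioo s 1, 0 < arctanhDivPowNum k x) :
    StrictMonoOn (arctanhDivPow k) (Ico s 1) := by
  refine strictMonoOn_of_deriv_pos (convex_Ico s 1)
    ((arctanhDivPow_continuousOn k).mono (Ico_subset_Ioo_left hs)) ?_
  rw [interior_Ico]
  intro x hx
  rw [(arctanhDivPow_hasDerivAt k ⟨hs.trans hx.1, hx.2⟩).deriv]
  exact div_pos (hv x hx) (pow_pos (hs.trans hx.1) _)

lemma exists_valley_arctanhDivPow (hk : 2 ≤ k) {ξ : ℝ} (ht : t < 1) (hξ : ξ ∈ Ioo 0 t)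
    (hle : arctanhDivPow k ξ ≤ arctanhDivPow k t) :
    ∃ s ∈ Ioo 0 t, StrictAntiOn (arctanhDivPow k) (Ioc 0 s) ∧
      StrictMonoOn (arctanhDivPow k) (Ico s 1) := by
  have hvt : 0 < arctanhDivPowNum k t := lt_of_not_ge fun hvt =>
    ((arctanhDivPow_strictAntiOn ht fun x hx => arctanhDivPowNum_neg_of_nonpos hx ht hvt)
      ⟨hξ.1, hξ.2.le⟩ ⟨hξ.1.trans hξ.2, le_rfl⟩ hξ.2).not_ge hle
  obtain ⟨s, hs, hneg, hpos⟩ := exists_arctanhDivPowNum_sign_change hk ⟨hξ.1.trans hξ.2, ht⟩ hvt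
  exact ⟨s, hs, arctanhDivPow_strictAntiOn (hs.2.trans ht) hneg,
    arctanhDivPow_strictMonoOn hs.1 hpos⟩

lemma tendsto_arctanhDivPow_nhdsGT_zero (hk : 2 ≤ k) :
    Tendsto (arctanhDivPow k) (𝓝[>] 0) atTop := by
  refine tendsto_atTop_mono' _ ?_ (tendsto_inv_nhdsGT_zero.atTop_div_const two_pos)
  filter_upwards [Ioo_mem_nhdsGT (one_pos : (0 : ℝ) < 1)] with x hx
  have harctanh := half_le_arctanh ⟨hx.1.le, hx.2⟩
  have hpow : x ^ k ≤ x ^ 2 := pow_le_pow_of_le_one hx.1.le hx.2.le hk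
  calc x⁻¹ / 2 = (x / 2) / x ^ 2 := by field_simp
    _ ≤ arctanh x / x ^ k :=
      div_le_div₀ ((half_pos hx.1).le.trans harctanh) harctanh (pow_pos hx.1 k) hpow

lemma exists_arctanhDivPow_eq (hk : 2 ≤ k) (hs : s ∈ Ioo (0 : ℝ) 1) {c : ℝ}
    (hc : arctanhDivPow k s < c) : ∃ x ∈ Ioo 0 s, arctanhDivPow k x = c := by
  obtain ⟨x₀, hcx₀, hx₀⟩ := ((tendsto_arctanhDivPow_nhdsGT_zero hk).eventually_gt_atTop c
    |>.and (Ioo_mem_nhdsGT hs.1)).exists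
  obtain ⟨x, hx, hux⟩ := intermediate_value_Ioo' hx₀.2.le
    ((arctanhDivPow_continuousOn k).mono (Icc_subset_Ioo hx₀.1 hs.2)) ⟨hc, hcx₀⟩
  exact ⟨x, ⟨hx₀.1.trans hx.1, hx.2⟩, hux⟩

end arctanhDivPow

section SignOfDerivative

variable {c x : ℝ} {k : ℕ}

lemma mul_pow_sub_arctanh_eq (hx : 0 < x) :
    c * x ^ k - arctanh x = x ^ k * (c - arctanhDivPow k x) := by
  rw [arctanhDivPow, mul_sub, mul_div_cancel₀ _ (pow_pos hx k).ne', mul_comm]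

lemma mul_pow_sub_arctanh_nonneg_iff (hx : 0 < x) :
    0 ≤ c * x ^ k - arctanh x ↔ arctanhDivPow k x ≤ c := by
  rw [mul_pow_sub_arctanh_eq hx, mul_nonneg_iff_of_pos_left (pow_pos hx k), sub_nonneg]

lemma mul_pow_sub_arctanh_nonpos_iff (hx : 0 < x) :
    c * x ^ k - arctanh x ≤ 0 ↔ c ≤ arctanhDivPow k x := by
  rw [mul_pow_sub_arctanh_eq hx, ← neg_nonneg, ← mul_neg,
    mul_nonneg_iff_of_pos_left (pow_pos hx k), neg_nonneg, sub_nonpos]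

lemma mul_pow_sub_arctanh_eq_zero_iff (hx : 0 < x) :
    c * x ^ k - arctanh x = 0 ↔ arctanhDivPow k x = c := by
  rw [mul_pow_sub_arctanh_eq hx, mul_eq_zero, or_iff_right (pow_ne_zero k hx.ne'), sub_eq_zero,
    eq_comm]

end SignOfDerivative

theorem statement3_general (p : ℕ) (hp : 3 ≤ p) (β : ℝ)
    (m : ℝ) (hm0 : 0 < m) (hm1 : m ∈ Set.Icc (-1 : ℝ) 1)
    (hmax : IsMaxOn (bahH β p) (Set.Icc (-1 : ℝ) 1) m) :
    ({x ∈ Set.Ioo (0 : ℝ) 1 | β * p * x ^ (p - 1) - arctanh x = 0}.Finite ∧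
      {x ∈ Set.Ioo (0 : ℝ) 1 | β * p * x ^ (p - 1) - arctanh x = 0}.ncard ≤ 3) ∧
    ∃ m' ∈ Set.Ioo 0 m,
      (∀ x ∈ Set.Ioo 0 m', β * p * x ^ (p - 1) - arctanh x ≤ 0) ∧
      (∀ x ∈ Set.Ioo m' m, 0 ≤ β * p * x ^ (p - 1) - arctanh x) ∧
      (∀ x ∈ Set.Ioo m 1, β * p * x ^ (p - 1) - arctanh x ≤ 0) := by
  have hk : 2 ≤ p - 1 := by omega
  have hm : m ∈ Ioo (0 : ℝ) 1 := ⟨hm0, lt_one_of_isMaxOn_bahH hm1.2 hmax⟩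
  have hum : arctanhDivPow (p - 1) m = β * p := (mul_pow_sub_arctanh_eq_zero_iff hm0).1 <|
    (hmax.isLocalMax (Icc_mem_nhds (by linarith) hm.2)).hasDerivAt_eq_zero
      (bahH_hasDerivAt β p ⟨by linarith, hm.2⟩)
  -- `H(m) ≥ H(0)`, so by the mean value theorem `H'` is nonnegative somewhere in `(0, m)`.
  obtain ⟨ξ, hξ, hslope⟩ := exists_hasDerivAt_eq_slope (bahH β p) _ hm0
    (bahH_continuous β p).continuousOn
    fun x hx => bahH_hasDerivAt β p ⟨by linarith [hx.1], hx.2.trans hm.2⟩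
  have huξ : arctanhDivPow (p - 1) ξ ≤ β * p := by
    rw [← mul_pow_sub_arctanh_nonneg_iff hξ.1, hslope]
    exact div_nonneg (sub_nonneg.2 (hmax ⟨by norm_num, by norm_num⟩)) (sub_nonneg.2 hm0.le)
  obtain ⟨s, hs, hanti, hmono⟩ := exists_valley_arctanhDivPow hk hm.2 hξ (huξ.trans hum.ge)
  obtain ⟨m', hm', hum'⟩ := exists_arctanhDivPow_eq hk ⟨hs.1, hs.2.trans hm.2⟩
    (hum ▸ hmono ⟨le_rfl, hs.2.trans hm.2⟩ ⟨hs.2.le, hm.2⟩ hs.2)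
  have h₁ : m' ∈ Ioc 0 s := ⟨hm'.1, hm'.2.le⟩
  have h₂ : m ∈ Ico s 1 := ⟨hs.2.le, hm.2⟩
  obtain ⟨hleft, hmid, hright⟩ := valley_sign_pattern hanti hmono h₁ h₂ hum' hum
  have hzeros : {x ∈ Ioo (0 : ℝ) 1 | β * p * x ^ (p - 1) - arctanh x = 0} ⊆ {m', m} :=
    fun x ⟨hx, hx₀⟩ => valley_levelSet_subset hanti hmono h₁ h₂ hum' hum
      ⟨hx, (mul_pow_sub_arctanh_eq_zero_iff hx.1).1 hx₀⟩
  refine ⟨⟨(toFinite _).subset hzeros, (ncard_le_ncard hzeros).trans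
      ((ncard_insert_le _ _).trans (by simp))⟩,
    m', ⟨hm'.1, hm'.2.trans hs.2⟩, fun x hx => ?_, fun x hx => ?_, fun x hx => ?_⟩
  · exact (mul_pow_sub_arctanh_nonpos_iff hx.1).2 (hleft x hx).le
  · exact (mul_pow_sub_arctanh_nonneg_iff (hm'.1.trans hx.1)).2 (hmid x hx).le
  · exact (mul_pow_sub_arctanh_nonpos_iff (hm0.trans hx.1)).2 (hright x hx).le

/-- For `p ≥ 3`, `β > β*(p)` and `m = m_*(β,p)` the positive global maximizer of
`H_{β,p}` on `[−1,1]`: the derivative `H'_{β,p}(x) = βp x^{p−1} − arctanh x` has at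
most 3 zeros in `(0,1)`, and there is `m̲ ∈ (0,m)` with `H' ≤ 0` on `(0,m̲)`,
`H' ≥ 0` on `(m̲,m)` and `H' ≤ 0` on `(m,1)`. -/
theorem statement3 (p : ℕ) (hp : 3 ≤ p) (β : ℝ) (hβ : betaStar p < β)
    (m : ℝ) (hm0 : 0 < m) (hm1 : m ∈ Set.Icc (-1 : ℝ) 1)
    (hmax : IsMaxOn (bahH β p) (Set.Icc (-1 : ℝ) 1) m) :
    ({x ∈ Set.Ioo (0 : ℝ) 1 | β * p * x ^ (p - 1) - arctanh x = 0}.Finite ∧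
      {x ∈ Set.Ioo (0 : ℝ) 1 | β * p * x ^ (p - 1) - arctanh x = 0}.ncard ≤ 3) ∧
    ∃ m' ∈ Set.Ioo 0 m,
      (∀ x ∈ Set.Ioo 0 m', β * p * x ^ (p - 1) - arctanh x ≤ 0) ∧
      (∀ x ∈ Set.Ioo m' m, 0 ≤ β * p * x ^ (p - 1) - arctanh x) ∧
      (∀ x ∈ Set.Ioo m 1, β * p * x ^ (p - 1) - arctanh x ≤ 0) :=
  statement3_general p hp β m hm0 hm1 hmax
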